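/- arXiv:1711.10876 — 2 statements merged into one kernel-verified Lean document; each statement's English description precedes it below -/
import Mathlib

section
/- Let q be an odd prime power and S a set of q+2 points of PG(2,q). Let x, y, z be distinct points of S_{4/3} such that the line joining x and y is the 3-secant to S at x (and hence also the 3-secant at y), while the lines joining z to x and z to y are bi-secants of S. Suppose Q is a nondegenerate quadratic form on F_q^3 vanishing at x, y and z such that, for each u ∈ {x,y,z}, the tangent line to S at u equals the polar line of u with respect to Q. Then the 3-secant to S at z is incident with the third point of S on the 3-secant through x and y, i.e. with the unique point of S on that line other than x and y. -/
/-!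
This is Segre's lemma of tangents. Take `x, y, z` as the triangle of reference. Seen from a
vertex `u`, the points of `S` off the two sides through `u` and off the `3`-secant at `u` lie on
distinct bisecants, so their slopes, together with the slopes of the tangent and (for `u = z`)
of the `3`-secant at `u`, run once through the nonzero elements of `F`, whose product is `-1`.
The slope of a point seen from `z` is the quotient of its slopes seen from `y` and from `x`, so
the three products combine to `σ_p τ_x τ_z = -σ τ_y`, where `τ_u` is the slope of the tangent at
`u`, `σ` the slope of the `3`-secant at `z` and `σ_p` that of the line `zp`. The tangents being
polars for one conic gives `τ_x τ_z = -τ_y`, hence `σ_p = σ`: `p` lies on the `3`-secant at `z`.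
-/

open Projectivization

abbrev Pt (F : Type) [Field F] : Type := Projectivization F (Fin 3 → F)

def IsLine (F : Type) [Field F] (W : Submodule F (Fin 3 → F)) : Prop :=
  Module.finrank F W = 2

noncomputable def secantCount (F : Type) [Field F] (S : Set (Pt F))
    (W : Submodule F (Fin 3 → F)) : ℕ :=
  {p ∈ S | p.submodule ≤ W}.ncard

noncomputable def oddSecants (F : Type) [Field F] (S : Set (Pt F)) : ℕ :=
  {W : Submodule F (Fin 3 → F) | IsLine F W ∧ Odd (secantCount F S W)}.ncard

noncomputable def linesThroughWithCount (F : Type) [Field F] (S : Set (Pt F))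
    (x : Pt F) (i : ℕ) : ℕ :=
  {W : Submodule F (Fin 3 → F) | IsLine F W ∧ x.submodule ≤ W ∧ secantCount F S W = i}.ncard

noncomputable def S43 (F : Type) [Field F] [Fintype F] (S : Set (Pt F)) : Set (Pt F) :=
  {x ∈ S | linesThroughWithCount F S x 1 = 1 ∧ linesThroughWithCount F S x 3 = 1 ∧
    linesThroughWithCount F S x 2 = Fintype.card F - 1}

open Module

variable {F : Type} [Field F]

theorem Projectivization.submodule_le_iff_rep_mem {K V : Type*} [DivisionRing K]
    [AddCommGroup V] [Module K V] (p : Projectivization K V) (W : Submodule K V) :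
    p.submodule ≤ W ↔ p.rep ∈ W := by
  rw [submodule_eq, Submodule.span_singleton_le_iff_mem]

theorem Projectivization.submodule_sup_submodule {K V : Type*} [DivisionRing K]
    [AddCommGroup V] [Module K V] (p q : Projectivization K V) :
    p.submodule ⊔ q.submodule = Submodule.span K {p.rep, q.rep} := by
  rw [submodule_eq, submodule_eq, ← Submodule.span_union, Set.singleton_union]

theorem isLine_sup {p q : Pt F} (h : p ≠ q) : IsLine F (p.submodule ⊔ q.submodule) := by
  have := finrank_span_eq_card (linearIndependent_pair_iff_ne.2 h)
  rwa [Matrix.range_cons_cons_empty, Fintype.card_fin, ← submodule_sup_submodule] at this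

theorem eq_sup_of_isLine {p q : Pt F} (h : p ≠ q) {W : Submodule F (Fin 3 → F)} (hW : IsLine F W)
    (hp : p.submodule ≤ W) (hq : q.submodule ≤ W) : W = p.submodule ⊔ q.submodule :=
  (Submodule.eq_of_le_of_finrank_eq (sup_le hp hq) ((isLine_sup h).trans hW.symm)).symm

theorem not_le_of_secantCount_ne {S : Set (Pt F)} {u v : Pt F} (huv : u ≠ v)
    {L : Submodule F (Fin 3 → F)} (hL : IsLine F L) (huL : u.submodule ≤ L)
    (h : secantCount F S (u.submodule ⊔ v.submodule) ≠ secantCount F S L) :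
    ¬ v.submodule ≤ L :=
  fun hv => h (by rw [← eq_sup_of_isLine huv hL huL hv])

theorem exists_ne_of_secantCount_eq_two {S : Set (Pt F)} {W : Submodule F (Fin 3 → F)}
    (h : secantCount F S W = 2) (u : Pt F) : ∃ t ∈ S, t.submodule ≤ W ∧ t ≠ u := by
  obtain ⟨t, ⟨htS, htW⟩, htu⟩ := Set.exists_ne_of_one_lt_ncard (s := {p ∈ S | p.submodule ≤ W})
    (by rw [← secantCount, h]; norm_num) u
  exact ⟨t, htS, htW, htu⟩

theorem exists_pair_of_secantCount_eq_three {S : Set (Pt F)} {W : Submodule F (Fin 3 → F)}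
    (h3 : secantCount F S W = 3) {z : Pt F} (hz : z ∈ S) (hzW : z.submodule ≤ W) :
    ∃ s₁ s₂ : Pt F, s₁ ∈ S ∧ s₂ ∈ S ∧ s₁.submodule ≤ W ∧ s₂.submodule ≤ W ∧ s₁ ≠ z ∧ s₂ ≠ z ∧
      s₁ ≠ s₂ := by
  have h2 : ({p ∈ S | p.submodule ≤ W} \ {z}).ncard = 2 := by
    rw [Set.ncard_sdiff_singleton_of_mem (show z ∈ {p ∈ S | p.submodule ≤ W} from ⟨hz, hzW⟩),
      ← secantCount, h3]
  obtain ⟨s₁, s₂, hs₁₂, hset⟩ := Set.ncard_eq_two.1 h2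
  have hs₁ : s₁ ∈ {p ∈ S | p.submodule ≤ W} \ {z} := hset ▸ Set.mem_insert _ _
  have hs₂ : s₂ ∈ {p ∈ S | p.submodule ≤ W} \ {z} := hset ▸ Set.mem_insert_of_mem _ rfl
  exact ⟨s₁, s₂, hs₁.1.1, hs₂.1.1, hs₁.1.2, hs₂.1.2, hs₁.2, hs₂.2, hs₁₂⟩

section Secants

variable [Finite F] {S : Set (Pt F)} {W : Submodule F (Fin 3 → F)}

theorem ncard_le_secantCount {A : Set (Pt F)} (hAS : A ⊆ S) (hAW : ∀ a ∈ A, a.submodule ≤ W) :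
    A.ncard ≤ secantCount F S W :=
  Set.ncard_le_ncard fun a ha => ⟨hAS ha, hAW a ha⟩

theorem mem_of_secantCount_le_ncard {A : Set (Pt F)} (hAS : A ⊆ S)
    (hAW : ∀ a ∈ A, a.submodule ≤ W) (hcount : secantCount F S W ≤ A.ncard) {s : Pt F}
    (hs : s ∈ S) (hsW : s.submodule ≤ W) : s ∈ A := by
  have hA : A = {p ∈ S | p.submodule ≤ W} :=
    Set.eq_of_subset_of_ncard_le (fun a ha => ⟨hAS ha, hAW a ha⟩) hcount
  exact hA ▸ ⟨hs, hsW⟩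

theorem eq_or_eq_of_secantCount_eq_two (h2 : secantCount F S W = 2) {a b : Pt F} (ha : a ∈ S)
    (hb : b ∈ S) (hab : a ≠ b) (haW : a.submodule ≤ W) (hbW : b.submodule ≤ W) {s : Pt F}
    (hs : s ∈ S) (hsW : s.submodule ≤ W) : s = a ∨ s = b :=
  mem_of_secantCount_le_ncard (A := {a, b}) (by simp [Set.insert_subset_iff, ha, hb])
    (by simp [haW, hbW]) (by rw [h2, Set.ncard_pair hab]) hs hsW

theorem eq_or_eq_or_eq_of_secantCount_eq_three (h3 : secantCount F S W = 3) {a b c : Pt F}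
    (ha : a ∈ S) (hb : b ∈ S) (hc : c ∈ S) (hab : a ≠ b) (hac : a ≠ c) (hbc : b ≠ c)
    (haW : a.submodule ≤ W) (hbW : b.submodule ≤ W) (hcW : c.submodule ≤ W) {s : Pt F}
    (hs : s ∈ S) (hsW : s.submodule ≤ W) : s = a ∨ s = b ∨ s = c :=
  mem_of_secantCount_le_ncard (A := {a, b, c}) (by simp [Set.insert_subset_iff, ha, hb, hc])
    (by simp [haW, hbW, hcW]) (by rw [h3, Set.ncard_eq_three.2 ⟨a, b, c, hab, hac, hbc, rfl⟩])
    hs hsW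

end Secants

theorem secantCount_sup_eq_two [Fintype F] {S : Set (Pt F)}
    (hS : S.ncard = Fintype.card F + 2) {u : Pt F}
    (hu2 : linesThroughWithCount F S u 2 = Fintype.card F - 1) {L : Submodule F (Fin 3 → F)}
    (hL : IsLine F L) (huL : u.submodule ≤ L) (hL3 : secantCount F S L = 3) {s : Pt F}
    (hs : s ∈ S) (hsL : ¬ s.submodule ≤ L) : secantCount F S (u.submodule ⊔ s.submodule) = 2 := by
  set join := fun t : Pt F => u.submodule ⊔ t.submodule
  have hoff : (S \ {t | t.submodule ≤ L}).ncard = Fintype.card F - 1 := by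
    have := Set.ncard_inter_add_ncard_sdiff_eq_ncard S {t | t.submodule ≤ L}
    change secantCount F S L + _ = _ at this
    omega
  have hbis : {W | IsLine F W ∧ u.submodule ≤ W ∧ secantCount F S W = 2} ⊆
      join '' (S \ {t | t.submodule ≤ L}) := by
    rintro W ⟨hW, huW, hW2⟩
    obtain ⟨t, htS, htW, htu⟩ := exists_ne_of_secantCount_eq_two hW2 u
    have hWt := eq_sup_of_isLine htu.symm hW huW htW
    refine ⟨t, ⟨htS, fun htL => ?_⟩, hWt.symm⟩
    rw [eq_sup_of_isLine htu.symm hL huL htL, ← hWt, hW2] at hL3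
    omega
  have hs' : join s ∈ join '' (S \ {t | t.submodule ≤ L}) := ⟨s, ⟨hs, hsL⟩, rfl⟩
  by_contra hs2
  -- the `q - 1` bisecants through `u` and the line `us` would be `q` lines joining `u` to
  -- the `q - 1` points of `S` off `L`
  have hcard := Set.ncard_le_ncard (Set.insert_subset hs' hbis)
  rw [Set.ncard_insert_of_notMem fun h => hs2 h.2.2] at hcard
  have := (Set.ncard_image_le (f := join) (s := S \ {t | t.submodule ≤ L})).trans hoff.le
  have : 2 ≤ Fintype.card F := Fintype.one_lt_card
  change linesThroughWithCount F S u 2 + 1 ≤ _ at hcard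
  omega

theorem eq_of_le_sup_of_not_le [Fintype F] {S : Set (Pt F)}
    (hS : S.ncard = Fintype.card F + 2) {u : Pt F} (hu : u ∈ S)
    (hu2 : linesThroughWithCount F S u 2 = Fintype.card F - 1) {L : Submodule F (Fin 3 → F)}
    (hL : IsLine F L) (huL : u.submodule ≤ L) (hL3 : secantCount F S L = 3) {s t : Pt F}
    (hs : s ∈ S) (hsL : ¬ s.submodule ≤ L) (ht : t ∈ S) (htu : t ≠ u)
    (h : t.submodule ≤ u.submodule ⊔ s.submodule) : t = s :=
  (eq_or_eq_of_secantCount_eq_two (secantCount_sup_eq_two hS hu2 hL huL hL3 hs hsL) hu hs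
    (fun hus => hsL (hus ▸ huL)) le_sup_left le_sup_right ht h).resolve_left htu

def TangentEqPolar (F : Type) [Field F] (S : Set (Pt F)) (Q : QuadraticForm F (Fin 3 → F))
    (u : Pt F) : Prop :=
  ∀ W : Submodule F (Fin 3 → F), IsLine F W → u.submodule ≤ W → secantCount F S W = 1 →
    W = LinearMap.ker (QuadraticMap.polarBilin Q u.rep)

theorem polarBilin_ne_zero_of_tangentEqPolar [Finite F] {S : Set (Pt F)}
    {Q : QuadraticForm F (Fin 3 → F)} {u : Pt F} (hu : u ∈ S)
    (hu1 : linesThroughWithCount F S u 1 = 1) (htan : TangentEqPolar F S Q u) {s : Pt F}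
    (hs : s ∈ S) (hsu : s ≠ u) : QuadraticMap.polarBilin Q u.rep s.rep ≠ 0 := by
  obtain ⟨T, hT⟩ := Set.ncard_eq_one.1 hu1
  obtain ⟨hTl, huT, hT1⟩ : T ∈ {W | IsLine F W ∧ u.submodule ≤ W ∧ secantCount F S W = 1} :=
    hT ▸ rfl
  intro h
  have hsT : s.submodule ≤ T := by
    rw [submodule_le_iff_rep_mem, htan T hTl huT hT1]
    exact h
  have := ncard_le_secantCount (S := S) (W := T) (A := {u, s})
    (by simp [Set.insert_subset_iff, hu, hs]) (by simp [huT, hsT])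
  rw [Set.ncard_pair hsu.symm, hT1] at this
  omega

theorem FiniteField.prod_erase_zero_eq_neg_one [Fintype F] [DecidableEq F] :
    ∏ a ∈ Finset.univ.erase (0 : F), a = -1 := by
  rw [← Units.val_one, ← Units.val_neg, ← FiniteField.prod_univ_units_id_eq_neg_one,
    Units.coe_prod]
  exact Finset.prod_bij' (fun a ha => Units.mk0 a (Finset.ne_of_mem_erase ha)) (fun u _ => u)
    (by simp) (by simp) (by simp) (by simp) (by simp)

theorem FiniteField.prod_mul_prod_eq_neg_one [Fintype F] [DecidableEq F] {ι : Type*} {T : Finset ι}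
    {f : ι → F} (hf : Set.InjOn f T) (hf0 : ∀ s ∈ T, f s ≠ 0) {E : Finset F}
    (hfE : ∀ s ∈ T, f s ∉ E) (hE0 : (0 : F) ∉ E) (hcard : T.card + E.card + 1 = Fintype.card F) :
    (∏ s ∈ T, f s) * ∏ a ∈ E, a = -1 := by
  have hdisj : Disjoint (T.image f) E := by
    simpa [Finset.disjoint_left] using hfE
  have hunion : T.image f ∪ E = Finset.univ.erase 0 := by
    refine Finset.eq_of_subset_of_card_le (fun a ha => ?_) ?_
    · rcases Finset.mem_union.1 ha with ha | ha
      · obtain ⟨s, hs, rfl⟩ := Finset.mem_image.1 ha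
        exact Finset.mem_erase.2 ⟨hf0 s hs, Finset.mem_univ _⟩
      · exact Finset.mem_erase.2 ⟨ne_of_mem_of_not_mem ha hE0, Finset.mem_univ _⟩
    · rw [Finset.card_union_of_disjoint hdisj, Finset.card_image_of_injOn hf,
        Finset.card_erase_of_mem (Finset.mem_univ _), Finset.card_univ]
      omega
  rw [← Finset.prod_image (f := fun a => a) hf, ← Finset.prod_union hdisj, hunion,
    FiniteField.prod_erase_zero_eq_neg_one]

theorem Finset.card_sdiff_sdiff_add_card_add_card {α : Type*} [DecidableEq α]
    {S A B : Finset α} (hA : A ⊆ S) (hB : B ⊆ S \ A) :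
    ((S \ A) \ B).card + B.card + A.card = S.card := by
  rw [card_sdiff_add_card_eq_card hB, card_sdiff_add_card_eq_card hA]

theorem Fin.sum_univ_three_of_ne {M : Type*} [AddCommMonoid M] (f : Fin 3 → M) {i j k : Fin 3}
    (hij : i ≠ j) (hik : i ≠ k) (hjk : j ≠ k) : ∑ l, f l = f i + f j + f k := by
  rw [Fin.sum_univ_three]
  fin_cases i <;> fin_cases j <;> fin_cases k <;> simp at hij hik hjk ⊢ <;> abel

theorem Module.Basis.eq_repr_smul_add_three {R V : Type*} [Semiring R] [AddCommMonoid V]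
    [Module R V] (e : Basis (Fin 3) R V) {i j k : Fin 3} (hij : i ≠ j) (hik : i ≠ k)
    (hjk : j ≠ k) (v : V) :
    v = e.repr v i • e i + e.repr v j • e j + e.repr v k • e k := by
  conv_lhs => rw [← e.sum_repr v]
  exact Fin.sum_univ_three_of_ne _ hij hik hjk

theorem mem_span_pair_of_mul_eq_mul {V : Type*} [AddCommGroup V] [Module F V]
    {φ ψ : V →ₗ[F] F} {u s t : V} (hker : ∀ v, φ v = 0 → ψ v = 0 → v ∈ F ∙ u)
    (hs : φ s ≠ 0) (h : φ t * ψ s = φ s * ψ t) : t ∈ Submodule.span F {u, s} := by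
  set r := φ t / φ s
  have hψ : ψ (t - r • s) = 0 := by
    simp only [map_sub, map_smul, smul_eq_mul, r]
    field_simp
    linear_combination -h
  obtain ⟨c, hc⟩ := Submodule.mem_span_singleton.1 (hker (t - r • s) (by simp [r, hs]) hψ)
  exact Submodule.mem_span_pair.2 ⟨c, r, by rw [hc]; abel⟩

theorem mul_eq_mul_of_mem_span_pair {R V : Type*} [CommRing R] [AddCommGroup V] [Module R V]
    {φ ψ : V →ₗ[R] R} {u s t : V} (hφ : φ u = 0) (hψ : ψ u = 0)
    (h : t ∈ Submodule.span R {u, s}) : φ t * ψ s = φ s * ψ t := by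
  obtain ⟨a, b, rfl⟩ := Submodule.mem_span_pair.1 h
  simp only [map_add, map_smul, smul_eq_mul, hφ, hψ]
  ring

theorem exists_basis_rep_eq {x y z : Pt F} (hxy : x ≠ y)
    (hz : ¬ z.submodule ≤ x.submodule ⊔ y.submodule) :
    ∃ e : Basis (Fin 3) F (Fin 3 → F), x.rep = e 0 ∧ y.rep = e 1 ∧ z.rep = e 2 := by
  have hli : LinearIndependent F ![x.rep, y.rep, z.rep] := by
    have : ![x.rep, y.rep, z.rep] = Fin.snoc ![x.rep, y.rep] z.rep := by
      ext i : 1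
      fin_cases i <;> rfl
    rw [this, linearIndependent_finSnoc, Matrix.range_cons_cons_empty, ← submodule_sup_submodule,
      ← submodule_le_iff_rep_mem]
    exact ⟨linearIndependent_pair_iff_ne.2 hxy, hz⟩
  refine ⟨basisOfLinearIndependentOfCardEqFinrank hli (by simp), ?_⟩
  simp [coe_basisOfLinearIndependentOfCardEqFinrank]

theorem ne_of_rep_eq_basis (e : Basis (Fin 3) F (Fin 3 → F)) {a b : Pt F} {l m : Fin 3}
    (ha : a.rep = e l) (hb : b.rep = e m) (hlm : l ≠ m) : a ≠ b :=
  fun hab => hlm (e.injective (ha ▸ hb ▸ congrArg Projectivization.rep hab))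

/-- The slope of the line joining `e i` to `s`, in the pencil through `e i` parametrised by the
`j`-th and `k`-th coordinates. -/
noncomputable def coordRatio (e : Basis (Fin 3) F (Fin 3 → F)) (j k : Fin 3) (s : Pt F) : F :=
  e.repr s.rep k / e.repr s.rep j

/-- The slope, in the same pencil, of the polar line of `e i`. -/
noncomputable def tangentRatio (Q : QuadraticForm F (Fin 3 → F))
    (e : Basis (Fin 3) F (Fin 3 → F)) (i j k : Fin 3) : F :=
  -(QuadraticMap.polarBilin Q (e i) (e j) / QuadraticMap.polarBilin Q (e i) (e k))

theorem tangentRatio_mul_tangentRatio (Q : QuadraticForm F (Fin 3 → F))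
    (e : Basis (Fin 3) F (Fin 3 → F)) {i j k : Fin 3}
    (hik : QuadraticMap.polarBilin Q (e i) (e k) ≠ 0) :
    tangentRatio Q e i j k * tangentRatio Q e k i j = -tangentRatio Q e j i k := by
  simp only [tangentRatio, QuadraticMap.polarBilin_apply_apply] at hik ⊢
  rw [QuadraticMap.polar_comm Q (e k) (e i), QuadraticMap.polar_comm Q (e j) (e i),
    QuadraticMap.polar_comm Q (e k) (e j)]
  field_simp

section Triangle

variable (e : Basis (Fin 3) F (Fin 3 → F)) {i j k : Fin 3} (hij : i ≠ j) (hik : i ≠ k) (hjk : j ≠ k)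
include hij hik hjk

theorem le_sup_of_repr_eq_zero {a b s : Pt F} (ha : a.rep = e i) (hb : b.rep = e j)
    (h : e.repr s.rep k = 0) : s.submodule ≤ a.submodule ⊔ b.submodule := by
  rw [submodule_le_iff_rep_mem, submodule_sup_submodule, ha, hb,
    e.eq_repr_smul_add_three hij hik hjk s.rep, h, zero_smul, add_zero]
  exact Submodule.mem_span_pair.2 ⟨_, _, rfl⟩

theorem repr_ne_zero_of_secantCount_eq_two [Finite F] {S : Set (Pt F)} {a b : Pt F}
    (ha : a.rep = e i) (hb : b.rep = e j) (haS : a ∈ S) (hbS : b ∈ S)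
    (h2 : secantCount F S (a.submodule ⊔ b.submodule) = 2) {s : Pt F} (hs : s ∈ S)
    (hsa : s ≠ a) (hsb : s ≠ b) : e.repr s.rep k ≠ 0 := fun h0 =>
  (eq_or_eq_of_secantCount_eq_two h2 haS hbS (ne_of_rep_eq_basis e ha hb hij) le_sup_left
    le_sup_right hs (le_sup_of_repr_eq_zero e hij hik hjk ha hb h0)).elim hsa hsb

theorem coordRatio_eq_iff {u s t : Pt F} (hu : u.rep = e i) (hs : e.repr s.rep j ≠ 0)
    (ht : e.repr t.rep j ≠ 0) :
    coordRatio e j k t = coordRatio e j k s ↔ t.submodule ≤ u.submodule ⊔ s.submodule := by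
  rw [submodule_le_iff_rep_mem, submodule_sup_submodule, hu, coordRatio, coordRatio,
    div_eq_div_iff ht hs]
  constructor
  · intro h
    refine mem_span_pair_of_mul_eq_mul (φ := e.coord j) (ψ := e.coord k) (fun v hj hk => ?_) hs
      (by simp only [Basis.coord_apply]; linear_combination -h)
    rw [Basis.coord_apply] at hj hk
    rw [e.eq_repr_smul_add_three hij hik hjk v, hj, hk, zero_smul, zero_smul, add_zero, add_zero]
    exact Submodule.smul_mem _ _ (Submodule.mem_span_singleton_self _)
  · intro h
    have := mul_eq_mul_of_mem_span_pair (φ := e.coord j) (ψ := e.coord k)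
      (by simp [hij]) (by simp [hik]) h
    simp only [Basis.coord_apply] at this
    linear_combination -this

theorem polarBilin_basis_apply {Q : QuadraticForm F (Fin 3 → F)} (hQ : Q (e i) = 0)
    (v : Fin 3 → F) : QuadraticMap.polarBilin Q (e i) v =
      e.repr v j * QuadraticMap.polarBilin Q (e i) (e j) +
        e.repr v k * QuadraticMap.polarBilin Q (e i) (e k) := by
  conv_lhs => rw [e.eq_repr_smul_add_three hij hik hjk v]
  simp [QuadraticMap.polar_self, hQ]

theorem coordRatio_ne_tangentRatio {Q : QuadraticForm F (Fin 3 → F)} (hQ : Q (e i) = 0)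
    (hk : QuadraticMap.polarBilin Q (e i) (e k) ≠ 0) {s : Pt F}
    (hs : QuadraticMap.polarBilin Q (e i) s.rep ≠ 0) (hsj : e.repr s.rep j ≠ 0) :
    coordRatio e j k s ≠ tangentRatio Q e i j k := by
  intro h
  rw [coordRatio, tangentRatio, div_eq_iff hsj] at h
  apply hs
  rw [polarBilin_basis_apply e hij hik hjk hQ, h]
  field_simp
  ring

theorem prod_coordRatio_mul_eq_neg_one [Fintype F] [DecidableEq F] [DecidableEq (Pt F)]
    {S : Finset (Pt F)} (hS : (S : Set (Pt F)).ncard = Fintype.card F + 2)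
    {Q : QuadraticForm F (Fin 3 → F)} {u v w : Pt F} (hu : u.rep = e i) (hv : v.rep = e j)
    (hw : w.rep = e k) (huS : u ∈ S43 F S) (hvS : v ∈ S) (hwS : w ∈ S) (hQu : Q u.rep = 0)
    (htan : TangentEqPolar F S Q u) {L : Submodule F (Fin 3 → F)} (hL : IsLine F L)
    (huL : u.submodule ≤ L) (hL3 : secantCount F S L = 3) {B : Finset (Pt F)}
    (hB : B ⊆ S \ {u, v, w}) (hT : ∀ s ∈ (S \ {u, v, w}) \ B,
      ¬ s.submodule ≤ L ∧ e.repr s.rep j ≠ 0 ∧ e.repr s.rep k ≠ 0)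
    {E : Finset F} (hE : ∀ s ∈ (S \ {u, v, w}) \ B, coordRatio e j k s ∉ E) (hE0 : (0 : F) ∉ E)
    (hτE : tangentRatio Q e i j k ∉ E) (hcard : E.card + 1 = B.card) :
    (∏ s ∈ (S \ {u, v, w}) \ B, coordRatio e j k s) * (tangentRatio Q e i j k * ∏ a ∈ E, a) =
      -1 := by
  have hB' : ∀ s ∈ (S : Set (Pt F)), s ≠ u → QuadraticMap.polarBilin Q (e i) s.rep ≠ 0 :=
    fun s hs hsu => hu ▸ polarBilin_ne_zero_of_tangentEqPolar huS.1 huS.2.1 htan hs hsu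
  have hBj := hv ▸ hB' v hvS (ne_of_rep_eq_basis e hv hu hij.symm)
  have hBk := hw ▸ hB' w hwS (ne_of_rep_eq_basis e hw hu hik.symm)
  have huj : e.repr u.rep j = 0 := by simp [hu, hij]
  have hTS : ∀ s ∈ (S \ {u, v, w}) \ B, s ∈ (S : Set (Pt F)) := fun s hs =>
    (Finset.mem_sdiff.1 (Finset.mem_sdiff.1 hs).1).1
  have hTcard := Finset.card_sdiff_sdiff_add_card_add_card
    (by simp [Finset.insert_subset_iff, Finset.mem_coe.1 huS.1, hvS, hwS]) hB
  rw [Finset.card_eq_three.2 ⟨u, v, w, ne_of_rep_eq_basis e hu hv hij,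
    ne_of_rep_eq_basis e hu hw hik, ne_of_rep_eq_basis e hv hw hjk, rfl⟩,
    ← Set.ncard_coe_finset S, hS] at hTcard
  rw [← Finset.prod_insert (f := fun a => a) hτE]
  refine FiniteField.prod_mul_prod_eq_neg_one (fun s hs t ht hst => ?_) (fun s hs => ?_)
    (fun s hs => ?_) ?_ (by rw [Finset.card_insert_of_notMem hτE]; omega)
  · obtain ⟨hsL, hsj, -⟩ := hT s hs
    exact (eq_of_le_sup_of_not_le hS huS.1 huS.2.2.2 hL huL hL3 (hTS s hs) hsL (hTS t ht)
      (fun htu => (hT t ht).2.1 (htu ▸ huj))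
      ((coordRatio_eq_iff e hij hik hjk hu hsj (hT t ht).2.1).1 hst.symm)).symm
  · exact div_ne_zero (hT s hs).2.2 (hT s hs).2.1
  · obtain ⟨-, hsj, -⟩ := hT s hs
    refine Finset.mem_insert.not.2 (not_or.2 ⟨?_, hE s hs⟩)
    exact coordRatio_ne_tangentRatio e hij hik hjk (hu ▸ hQu) hBk
      (hB' s (hTS s hs) fun hsu => hsj (hsu ▸ huj)) hsj
  · refine Finset.mem_insert.not.2 (not_or.2 ⟨fun h => ?_, hE0⟩)
    rw [eq_comm, tangentRatio, neg_eq_zero, div_eq_zero_iff] at h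
    exact h.elim hBj hBk

theorem prod_coordRatio_mul_tangentRatio_of_threeSecant_side [Fintype F] [DecidableEq F]
    [DecidableEq (Pt F)] {S : Finset (Pt F)} (hS : (S : Set (Pt F)).ncard = Fintype.card F + 2)
    {Q : QuadraticForm F (Fin 3 → F)} {u v w p : Pt F} (hu : u.rep = e i) (hv : v.rep = e j)
    (hw : w.rep = e k) (huS : u ∈ S43 F S) (hvS : v ∈ S) (hwS : w ∈ S) (hpS : p ∈ S)
    (hQu : Q u.rep = 0) (htan : TangentEqPolar F S Q u)
    (huv3 : secantCount F S (u.submodule ⊔ v.submodule) = 3)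
    (hp : p.submodule ≤ u.submodule ⊔ v.submodule) (hpu : p ≠ u) (hpv : p ≠ v)
    (huw2 : secantCount F S (u.submodule ⊔ w.submodule) = 2) :
    (∏ s ∈ (S \ {u, v, w}) \ {p}, coordRatio e j k s) * tangentRatio Q e i j k = -1 := by
  have huv := ne_of_rep_eq_basis e hu hv hij
  have huw := ne_of_rep_eq_basis e hu hw hik
  have hL := isLine_sup huv
  have hpw : p ≠ w := fun h =>
    not_le_of_secantCount_ne (S := S) huw hL le_sup_left (by omega) (h ▸ hp)
  have hT : ∀ s ∈ (S \ {u, v, w}) \ {p}, ¬ s.submodule ≤ u.submodule ⊔ v.submodule ∧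
      e.repr s.rep j ≠ 0 ∧ e.repr s.rep k ≠ 0 := by
    intro s hs
    simp only [Finset.mem_sdiff, Finset.mem_insert, Finset.mem_singleton, not_or] at hs
    obtain ⟨⟨hsS, hsu, hsv, hsw⟩, hsp⟩ := hs
    have hsL : ¬ s.submodule ≤ u.submodule ⊔ v.submodule := fun h => by
      rcases eq_or_eq_or_eq_of_secantCount_eq_three huv3 huS.1 hvS hpS huv hpu.symm hpv.symm
        le_sup_left le_sup_right hp hsS h with rfl | rfl | rfl <;> contradiction
    exact ⟨hsL, repr_ne_zero_of_secantCount_eq_two e hik hij hjk.symm hu hw huS.1 hwS huw2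
      hsS hsu hsw, fun h0 => hsL (le_sup_of_repr_eq_zero e hij hik hjk hu hv h0)⟩
  simpa using prod_coordRatio_mul_eq_neg_one e hij hik hjk hS hu hv hw huS hvS hwS hQu htan hL
    le_sup_left huv3 (by simp [hpS, hpu, hpv, hpw]) hT (E := ∅) (by simp) (by simp) (by simp)
    (by simp)

theorem prod_coordRatio_mul_tangentRatio_of_bisecant_sides [Fintype F] [DecidableEq F]
    [DecidableEq (Pt F)] {S : Finset (Pt F)} (hS : (S : Set (Pt F)).ncard = Fintype.card F + 2)
    {Q : QuadraticForm F (Fin 3 → F)} {u v w : Pt F} (hu : u.rep = e i) (hv : v.rep = e j)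
    (hw : w.rep = e k) (huS : u ∈ S43 F S) (hvS : v ∈ S) (hwS : w ∈ S) (hQu : Q u.rep = 0)
    (htan : TangentEqPolar F S Q u) (huv2 : secantCount F S (u.submodule ⊔ v.submodule) = 2)
    (huw2 : secantCount F S (u.submodule ⊔ w.submodule) = 2) {L : Submodule F (Fin 3 → F)}
    (hL : IsLine F L) (huL : u.submodule ≤ L) (hL3 : secantCount F S L = 3) {s₁ s₂ : Pt F}
    (hs₁S : s₁ ∈ S) (hs₂S : s₂ ∈ S) (hs₁L : s₁.submodule ≤ L) (hs₂L : s₂.submodule ≤ L)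
    (hs₁u : s₁ ≠ u) (hs₂u : s₂ ≠ u) (hs₁₂ : s₁ ≠ s₂) :
    (∏ s ∈ (S \ {u, v, w}) \ {s₁, s₂}, coordRatio e j k s) *
      (tangentRatio Q e i j k * coordRatio e j k s₁) = -1 := by
  have huw := ne_of_rep_eq_basis e hu hw hik
  have hvL := not_le_of_secantCount_ne (S := S) (ne_of_rep_eq_basis e hu hv hij) hL huL
    (by omega)
  have hwL := not_le_of_secantCount_ne (S := S) huw hL huL (by omega)
  have hj : ∀ s ∈ (S : Set (Pt F)), s ≠ u → s ≠ w → e.repr s.rep j ≠ 0 := fun s hs =>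
    repr_ne_zero_of_secantCount_eq_two e hik hij hjk.symm hu hw huS.1 hwS huw2 hs
  have hk : ∀ s ∈ (S : Set (Pt F)), s ≠ u → s ≠ v → e.repr s.rep k ≠ 0 := fun s hs =>
    repr_ne_zero_of_secantCount_eq_two e hij hik hjk hu hv huS.1 hvS huv2 hs
  have hs₁j := hj s₁ hs₁S hs₁u (fun h => hwL (h ▸ hs₁L))
  have hs₁k := hk s₁ hs₁S hs₁u (fun h => hvL (h ▸ hs₁L))
  have hT : ∀ s ∈ (S \ {u, v, w}) \ {s₁, s₂}, ¬ s.submodule ≤ L ∧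
      e.repr s.rep j ≠ 0 ∧ e.repr s.rep k ≠ 0 := by
    intro s hs
    simp only [Finset.mem_sdiff, Finset.mem_insert, Finset.mem_singleton, not_or] at hs
    obtain ⟨⟨hsS, hsu, hsv, hsw⟩, hs₁, hs₂⟩ := hs
    refine ⟨fun hsL => ?_, hj s hsS hsu hsw, hk s hsS hsu hsv⟩
    rcases eq_or_eq_or_eq_of_secantCount_eq_three hL3 huS.1 hs₁S hs₂S hs₁u.symm hs₂u.symm hs₁₂
      huL hs₁L hs₂L hsS hsL with rfl | rfl | rfl <;> contradiction
  have hE : ∀ s ∈ (S \ {u, v, w}) \ {s₁, s₂},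
      coordRatio e j k s ∉ ({coordRatio e j k s₁} : Finset F) := by
    intro s hs h
    rw [Finset.mem_singleton, coordRatio_eq_iff e hij hik hjk hu hs₁j (hT s hs).2.1,
      ← eq_sup_of_isLine hs₁u.symm hL huL hs₁L] at h
    exact (hT s hs).1 h
  have hτ : tangentRatio Q e i j k ≠ coordRatio e j k s₁ :=
    (coordRatio_ne_tangentRatio e hij hik hjk (hu ▸ hQu)
      (hu ▸ hw ▸ polarBilin_ne_zero_of_tangentEqPolar huS.1 huS.2.1 htan hwS huw.symm)
      (hu ▸ polarBilin_ne_zero_of_tangentEqPolar huS.1 huS.2.1 htan hs₁S hs₁u) hs₁j).symm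
  have hB : {s₁, s₂} ⊆ S \ {u, v, w} := by
    simp only [Finset.insert_subset_iff, Finset.singleton_subset_iff, Finset.mem_sdiff,
      Finset.mem_insert, Finset.mem_singleton, not_or]
    exact ⟨⟨hs₁S, hs₁u, fun h => hvL (h ▸ hs₁L), fun h => hwL (h ▸ hs₁L)⟩,
      hs₂S, hs₂u, fun h => hvL (h ▸ hs₂L), fun h => hwL (h ▸ hs₂L)⟩
  simpa using prod_coordRatio_mul_eq_neg_one e hij hik hjk hS hu hv hw huS hvS hwS hQu htan hL
    huL hL3 hB hT hE (by simpa [eq_comm, coordRatio] using div_ne_zero hs₁k hs₁j) (by simpa using hτ)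
    (by simp [Finset.card_pair hs₁₂])

end Triangle

theorem eq_of_product_identities {P₀ P₁ P₂ R τ₀ τ₁ τ₂ a b : F} (h₀ : P₂ / P₁ * τ₀ = -1)
    (h₁ : P₂ / P₀ * τ₁ = -1) (h₂ : R * (τ₂ * a) = -1) (hsplit : b * (P₁ / P₀) = a * a * R)
    (hτ : τ₀ * τ₂ = -τ₁) : b = a := by
  have hP₁ : P₁ ≠ 0 := by
    rintro rfl
    simp at h₀
  have hmul : P₂ / P₀ = P₂ / P₁ * (P₁ / P₀) := (div_mul_div_cancel₀ hP₁).symm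
  linear_combination b * h₁ - b * (P₂ / P₀) * hτ + τ₀ * τ₂ * b * hmul +
    τ₀ * τ₂ * (P₂ / P₁) * hsplit + a * R * τ₂ * a * h₀ - a * h₂

theorem le_sup_of_prod_eq_neg_one [DecidableEq (Pt F)] (e : Basis (Fin 3) F (Fin 3 → F))
    {z : Pt F} (hz : z.rep = e 2) {T : Finset (Pt F)} (hT : ∀ s ∈ T, e.repr s.rep 0 ≠ 0)
    {p s₁ s₂ : Pt F} (hp : p ∈ T) (hs₁ : s₁ ∈ T) (hs₂ : s₂ ∈ T) (hs₁₂ : s₁ ≠ s₂)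
    (hs₂L : s₂.submodule ≤ z.submodule ⊔ s₁.submodule) {τ₀ τ₁ τ₂ : F} (hτ : τ₀ * τ₂ = -τ₁)
    (h₀ : (∏ s ∈ T \ {p}, coordRatio e 1 2 s) * τ₀ = -1)
    (h₁ : (∏ s ∈ T \ {p}, coordRatio e 0 2 s) * τ₁ = -1)
    (h₂ : (∏ s ∈ T \ {s₁, s₂}, coordRatio e 0 1 s) * (τ₂ * coordRatio e 0 1 s₁) = -1) :
    p.submodule ≤ z.submodule ⊔ s₁.submodule := by
  have hc : ∀ t ∈ T, coordRatio e 0 1 t = coordRatio e 0 1 s₁ ↔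
      t.submodule ≤ z.submodule ⊔ s₁.submodule := fun t ht =>
    coordRatio_eq_iff e (i := 2) (by decide) (by decide) (by decide) hz (hT s₁ hs₁) (hT t ht)
  rw [← hc p hp]
  simp only [coordRatio, Finset.prod_div_distrib] at h₀ h₁
  refine eq_of_product_identities h₀ h₁ h₂ ?_ hτ
  have hp' := Finset.prod_sdiff (f := coordRatio e 0 1) (Finset.singleton_subset_iff.2 hp)
  have hs' := Finset.prod_sdiff (f := coordRatio e 0 1)
    (Finset.insert_subset hs₁ (Finset.singleton_subset_iff.2 hs₂))
  rw [Finset.prod_singleton] at hp'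
  rw [Finset.prod_pair hs₁₂, (hc s₂ hs₂).2 hs₂L] at hs'
  rw [← Finset.prod_div_distrib]
  change coordRatio e 0 1 p * ∏ s ∈ T \ {p}, coordRatio e 0 1 s = _
  linear_combination hp' - hs'

theorem three_secant_through_third_point_general (F : Type) [Field F] [Fintype F]
    (S : Set (Pt F)) (hS : S.ncard = Fintype.card F + 2)
    (x y z : Pt F) (hx : x ∈ S43 F S) (hy : y ∈ S43 F S) (hz : z ∈ S43 F S)
    (hxy : x ≠ y) (hxz : x ≠ z) (hyz : y ≠ z)
    (h3xy : secantCount F S (x.submodule ⊔ y.submodule) = 3)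
    (hbixz : secantCount F S (x.submodule ⊔ z.submodule) = 2)
    (hbiyz : secantCount F S (y.submodule ⊔ z.submodule) = 2)
    (Q : QuadraticForm F (Fin 3 → F))
    (hQx : Q x.rep = 0) (hQy : Q y.rep = 0) (hQz : Q z.rep = 0)
    (htan : ∀ u ∈ ({x, y, z} : Set (Pt F)), ∀ W : Submodule F (Fin 3 → F),
      IsLine F W → u.submodule ≤ W → secantCount F S W = 1 →
      W = LinearMap.ker (QuadraticMap.polarBilin Q u.rep)) :
    ∀ W : Submodule F (Fin 3 → F), IsLine F W → z.submodule ≤ W → secantCount F S W = 3 →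
      ∀ p ∈ S, p.submodule ≤ x.submodule ⊔ y.submodule → p ≠ x → p ≠ y →
        p.submodule ≤ W := by
  classical
  intro W hW hzW hW3 p hpS hpxy hpx hpy
  by_contra hpW
  obtain ⟨S, rfl⟩ := S.toFinite.exists_finset_coe
  have hzxy := not_le_of_secantCount_ne (S := S) hxz (isLine_sup hxy) le_sup_left (by omega)
  have hxW := not_le_of_secantCount_ne (S := S) hxz.symm hW hzW (by rw [sup_comm]; omega)
  have hyW := not_le_of_secantCount_ne (S := S) hyz.symm hW hzW (by rw [sup_comm]; omega)
  obtain ⟨e, hex, hey, hez⟩ := exists_basis_rep_eq hxy hzxy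
  obtain ⟨s₁, s₂, hs₁S, hs₂S, hs₁W, hs₂W, hs₁z, hs₂z, hs₁₂⟩ :=
    exists_pair_of_secantCount_eq_three hW3 hz.1 hzW
  have h₀ := prod_coordRatio_mul_tangentRatio_of_threeSecant_side e (i := 0) (j := 1) (k := 2)
    (by decide) (by decide) (by decide) hS hex hey hez hx hy.1 hz.1 hpS hQx (htan x (by simp))
    h3xy hpxy hpx hpy hbixz
  have h₁ := prod_coordRatio_mul_tangentRatio_of_threeSecant_side e (i := 1) (j := 0) (k := 2)
    (by decide) (by decide) (by decide) hS hey hex hez hy hx.1 hz.1 hpS hQy (htan y (by simp))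
    (sup_comm x.submodule _ ▸ h3xy) (sup_comm x.submodule _ ▸ hpxy) hpy hpx hbiyz
  have h₂ := prod_coordRatio_mul_tangentRatio_of_bisecant_sides e (i := 2) (j := 0) (k := 1)
    (by decide) (by decide) (by decide) hS hez hex hey hz hx.1 hy.1 hQz (htan z (by simp))
    (sup_comm x.submodule _ ▸ hbixz) (sup_comm y.submodule _ ▸ hbiyz) hW hzW hW3 hs₁S hs₂S hs₁W
    hs₂W hs₁z hs₂z hs₁₂
  rw [Finset.insert_comm y x] at h₁
  rw [Finset.insert_comm z x, Finset.pair_comm z y] at h₂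
  have hτ := tangentRatio_mul_tangentRatio Q e (i := 0) (j := 1) (k := 2) (hex ▸ hez ▸
    polarBilin_ne_zero_of_tangentEqPolar hx.1 hx.2.1 (htan x (by simp)) hz.1 hxz.symm)
  have hT : ∀ s ∈ S, s ≠ x → s ≠ y → s ≠ z → s ∈ S \ {x, y, z} := fun s hs hsx hsy hsz =>
    Finset.mem_sdiff.2 ⟨hs, by simp [hsx, hsy, hsz]⟩
  have hWs₁ := eq_sup_of_isLine hs₁z.symm hW hzW hs₁W
  refine hpW (hWs₁ ▸ le_sup_of_prod_eq_neg_one e hez (fun s hs => ?_)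
    (hT p hpS hpx hpy fun h => hzxy (h ▸ hpxy))
    (hT s₁ hs₁S (fun h => hxW (h ▸ hs₁W)) (fun h => hyW (h ▸ hs₁W)) hs₁z)
    (hT s₂ hs₂S (fun h => hxW (h ▸ hs₂W)) (fun h => hyW (h ▸ hs₂W)) hs₂z) hs₁₂ (hWs₁ ▸ hs₂W)
    hτ h₀ h₁ h₂)
  simp only [Finset.mem_sdiff, Finset.mem_insert, Finset.mem_singleton, not_or] at hs
  exact repr_ne_zero_of_secantCount_eq_two e (i := 1) (j := 2) (k := 0) (by decide) (by decide)
    (by decide) hey hez hy.1 hz.1 hbiyz hs.1 hs.2.2.1 hs.2.2.2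

/-- If `x, y, z ∈ S_{4/3}` lie on a nondegenerate conic whose tangent lines at `x, y, z` are
the tangents to `S` there, the line joining `x` and `y` is the `3`-secant to `S` at `x` (and
at `y`), and the lines joining `z` to `x` and to `y` are bi-secants, then the `3`-secant to
`S` at `z` passes through the third point of `S` on the line through `x` and `y`. -/
theorem three_secant_through_third_point (F : Type) [Field F] [Fintype F]
    (hq : Odd (Fintype.card F))
    (S : Set (Pt F)) (hS : S.ncard = Fintype.card F + 2)
    (x y z : Pt F) (hx : x ∈ S43 F S) (hy : y ∈ S43 F S) (hz : z ∈ S43 F S)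
    (hxy : x ≠ y) (hxz : x ≠ z) (hyz : y ≠ z)
    (h3xy : secantCount F S (x.submodule ⊔ y.submodule) = 3)
    (hbixz : secantCount F S (x.submodule ⊔ z.submodule) = 2)
    (hbiyz : secantCount F S (y.submodule ⊔ z.submodule) = 2)
    (Q : QuadraticForm F (Fin 3 → F))
    (hQnd : LinearMap.BilinForm.Nondegenerate (QuadraticMap.polarBilin Q))
    (hQx : Q x.rep = 0) (hQy : Q y.rep = 0) (hQz : Q z.rep = 0)
    (htan : ∀ u ∈ ({x, y, z} : Set (Pt F)), ∀ W : Submodule F (Fin 3 → F),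
      IsLine F W → u.submodule ≤ W → secantCount F S W = 1 →
      W = LinearMap.ker (QuadraticMap.polarBilin Q u.rep)) :
    ∀ W : Submodule F (Fin 3 → F), IsLine F W → z.submodule ≤ W → secantCount F S W = 3 →
      ∀ p ∈ S, p.submodule ≤ x.submodule ⊔ y.submodule → p ≠ x → p ≠ y →
        p.submodule ≤ W :=
  three_secant_through_third_point_general F S hS x y z hx hy hz hxy hxz hyz h3xy hbixz hbiyz Q hQx
    hQy hQz htan
end

section
/- Let q be an odd prime power, t ≥ 1 an integer, and S a set of q+t+1 points of PG(2,q). Let S_t denote the set of points of S incident with at most one tangent of S. Then o(S) ≥ 2·(q+t+1−|S_t|). -/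
/-
Every tangent is an odd secant, and a tangent meets `S` in exactly one point, so double counting
the pairs (point of `S`, tangent through it) shows that the points of `S` off `S_t`, each on at
least two tangents, account for at least `2 |S \ S_t|` distinct tangents.
-/

open Projectivization

theorem Set.ncard_mul_le_ncard_mul {α β : Type*} [Finite α] [Finite β] (r : α → β → Prop)
    {s : Set α} {t : Set β} {m n : ℕ} (hm : ∀ a ∈ s, m ≤ {b ∈ t | r a b}.ncard)
    (hn : ∀ b ∈ t, {a ∈ s | r a b}.ncard ≤ n) : s.ncard * m ≤ t.ncard * n := by
  classical
  have := Fintype.ofFinite α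
  have := Fintype.ofFinite β
  simp only [Set.ncard_eq_toFinset_card'] at hm hn ⊢
  refine Finset.card_mul_le_card_mul r (fun a ha => ?_) (fun b hb => ?_)
  · convert hm a (Set.mem_toFinset.mp ha) using 2
    ext; simp [Finset.bipartiteAbove]
  · convert hn b (Set.mem_toFinset.mp hb) using 2
    ext; simp [Finset.bipartiteBelow]

section Tangents

variable {F : Type} [Field F] (S : Set (Pt F))

def tangents : Set (Submodule F (Fin 3 → F)) := {W | IsLine F W ∧ secantCount F S W = 1}

theorem ncard_tangents_through (x : Pt F) :
    {W ∈ tangents S | x.submodule ≤ W}.ncard = linesThroughWithCount F S x 1 :=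
  congrArg Set.ncard <| Set.ext fun _ =>
    ⟨fun ⟨⟨hl, hc⟩, hx⟩ => ⟨hl, hx, hc⟩, fun ⟨hl, hx, hc⟩ => ⟨⟨hl, hc⟩, hx⟩⟩

variable [Finite F]

theorem ncard_tangents_le_oddSecants : (tangents S).ncard ≤ oddSecants F S :=
  Set.ncard_le_ncard (fun _ hW => ⟨hW.1, hW.2 ▸ odd_one⟩) (Set.toFinite _)

-- Double counting incident pairs (point, tangent): a tangent carries only one point of `S`.
theorem two_mul_ncard_le_ncard_tangents :
    2 * {x ∈ S | 1 < linesThroughWithCount F S x 1}.ncard ≤ (tangents S).ncard := by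
  rw [mul_comm, ← mul_one (tangents S).ncard]
  refine Set.ncard_mul_le_ncard_mul (fun x W => x.submodule ≤ W) (fun x hx => ?_) (fun W hW => ?_)
  · rw [ncard_tangents_through]; exact hx.2
  · rw [← hW.2]
    exact Set.ncard_le_ncard (fun x hx => ⟨hx.1.1, hx.2⟩) (Set.toFinite _)

end Tangents

theorem odd_secants_ge_of_St_general (F : Type) [Field F] [Fintype F]
    (t : ℕ)
    (S : Set (Pt F)) (hS : S.ncard = Fintype.card F + t + 1) :
    2 * ((Fintype.card F : ℤ) + t + 1 -
        ({x ∈ S | linesThroughWithCount F S x 1 ≤ 1}.ncard : ℤ)) ≤ (oddSecants F S : ℤ) := by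
  set St := {x ∈ S | linesThroughWithCount F S x 1 ≤ 1}
  have hSt : St ⊆ S := fun _ hx => hx.1
  have hcompl : S \ St = {x ∈ S | 1 < linesThroughWithCount F S x 1} := by
    ext x
    simp [St]
  have key : 2 * (S \ St).ncard ≤ oddSecants F S :=
    hcompl ▸ (two_mul_ncard_le_ncard_tangents S).trans (ncard_tangents_le_oddSecants S)
  have hStcard := Set.ncard_le_ncard hSt
  rw [Set.ncard_sdiff hSt] at key
  omega

/-- For a set `S` of `q + t + 1` points, `q` odd, `t ≥ 1`, letting `S_t` be the set of points
of `S` incident with at most one tangent, the number of odd secants of `S` is at least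
`2 (q + t + 1 - |S_t|)`. -/
theorem odd_secants_ge_of_St (F : Type) [Field F] [Fintype F]
    (hq : Odd (Fintype.card F)) (t : ℕ) (ht : 1 ≤ t)
    (S : Set (Pt F)) (hS : S.ncard = Fintype.card F + t + 1) :
    2 * ((Fintype.card F : ℤ) + t + 1 -
        ({x ∈ S | linesThroughWithCount F S x 1 ≤ 1}.ncard : ℤ)) ≤ (oddSecants F S : ℤ) :=
  odd_secants_ge_of_St_general F t S hS
end
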